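/- Let A,B be dg-categories and F,G:A→B strictly unital A∞-functors. There is a bijection between closed degree-0 A∞-natural transformations h:F→G and A∞-functors φ:A→Mor(B) satisfying S∘φ=F and T∘φ=G, given by φᵈ=(Fᵈ,Gᵈ,hᵈ) on components (and φ⁰(X)=(F(X),G(X),h⁰_X) on objects). -/

import Mathlib

/-- The data of a differential graded category over a field `k`:
objects, `ℤ`-graded hom spaces, a (degree-additive) composition, a differential
of degree `+1`, and identity morphisms. -/
structure DGData (k : Type) [Field k] : Type 1 where
  Obj : Type
  Hom : Obj → Obj → ℤ → Type
  addgrp : ∀ X Y n, AddCommGroup (Hom X Y n)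
  smod : ∀ X Y n, Module k (Hom X Y n)
  comp : ∀ {X Y Z : Obj} {m n p : ℤ}, m + n = p → Hom Y Z m → Hom X Y n → Hom X Z p
  d : ∀ {X Y : Obj} {n : ℤ}, Hom X Y n → Hom X Y (n + 1)
  one : ∀ X : Obj, Hom X X 0

attribute [instance] DGData.addgrp DGData.smod

namespace DGData

variable {k : Type} [Field k]

/-- Transport a homogeneous morphism along an equality of degrees. -/
def cst (A : DGData k) {X Y : A.Obj} {m n : ℤ} (e : m = n) (f : A.Hom X Y m) :
    A.Hom X Y n := e ▸ f

end DGData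

/-- A differential graded category over a field `k`: dg-data satisfying the axioms of a
category enriched in cochain complexes of `k`-vector spaces. -/
structure DGCat (k : Type) [Field k] extends DGData k where
  d_add : ∀ {X Y : toDGData.Obj} {n : ℤ} (f g : toDGData.Hom X Y n), d (f + g) = d f + d g
  d_smul : ∀ {X Y : toDGData.Obj} {n : ℤ} (a : k) (f : toDGData.Hom X Y n),
    d (a • f) = a • d f
  d_sq : ∀ {X Y : toDGData.Obj} {n : ℤ} (f : toDGData.Hom X Y n), d (d f) = 0
  comp_add_left : ∀ {X Y Z : toDGData.Obj} {m n p : ℤ} (e : m + n = p)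
    (g g' : toDGData.Hom Y Z m) (f : toDGData.Hom X Y n),
    comp e (g + g') f = comp e g f + comp e g' f
  comp_add_right : ∀ {X Y Z : toDGData.Obj} {m n p : ℤ} (e : m + n = p)
    (g : toDGData.Hom Y Z m) (f f' : toDGData.Hom X Y n),
    comp e g (f + f') = comp e g f + comp e g f'
  comp_smul_left : ∀ {X Y Z : toDGData.Obj} {m n p : ℤ} (e : m + n = p) (a : k)
    (g : toDGData.Hom Y Z m) (f : toDGData.Hom X Y n),
    comp e (a • g) f = a • comp e g f
  comp_smul_right : ∀ {X Y Z : toDGData.Obj} {m n p : ℤ} (e : m + n = p) (a : k)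
    (g : toDGData.Hom Y Z m) (f : toDGData.Hom X Y n),
    comp e g (a • f) = a • comp e g f
  assoc : ∀ {W X Y Z : toDGData.Obj} {m n p q r s : ℤ}
    (e1 : m + n = q) (e2 : q + p = s) (e3 : n + p = r) (e4 : m + r = s)
    (h : toDGData.Hom Y Z m) (g : toDGData.Hom X Y n) (f : toDGData.Hom W X p),
    comp e2 (comp e1 h g) f = comp e4 h (comp e3 g f)
  id_comp : ∀ {X Y : toDGData.Obj} {n : ℤ} (f : toDGData.Hom X Y n),
    comp (zero_add n) (one Y) f = f
  comp_id : ∀ {X Y : toDGData.Obj} {n : ℤ} (f : toDGData.Hom X Y n),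
    comp (add_zero n) f (one X) = f
  leibniz : ∀ {X Y Z : toDGData.Obj} {m n p : ℤ} (e : m + n = p)
    (g : toDGData.Hom Y Z m) (f : toDGData.Hom X Y n),
    d (comp e g f) =
      comp (show m + 1 + n = p + 1 by omega) (d g) f +
        ((m.negOnePow : ℤ)) • comp (show m + (n + 1) = p + 1 by omega) g (d f)

namespace DGData

variable {k : Type} [Field k]

/-- An object of the dg-category `Mor(A)` of homotopy coherent morphisms:
a closed degree-zero morphism. -/
structure MorObj (A : DGData k) : Type where
  src : A.Obj
  tgt : A.Obj
  f : A.Hom src tgt 0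
  closed : A.d f = 0

/-- Degree `n` morphisms in `Mor(A)`: triples `(u, v, h)`. -/
abbrev MorHom (A : DGData k) (P Q : MorObj A) (n : ℤ) : Type :=
  A.Hom P.src Q.src n × A.Hom P.tgt Q.tgt n × A.Hom P.src Q.tgt (n - 1)

variable (A : DGData k)

/-- Composition in `Mor(A)`: `(u',v',h') ∘ (u,v,h) = (u'u, v'v, (-1)^n h'u + v'h)`
where `n` is the degree of `(u,v,h)`. -/
def morComp {P Q R : MorObj A} {m n p : ℤ} (e : m + n = p)
    (ψ : MorHom A Q R m) (φ : MorHom A P Q n) : MorHom A P R p :=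
  ⟨A.comp e ψ.1 φ.1, A.comp e ψ.2.1 φ.2.1,
    (n.negOnePow : ℤ) • A.comp (show m - 1 + n = p - 1 by omega) ψ.2.2 φ.1 +
      A.comp (show m + (n - 1) = p - 1 by omega) ψ.2.1 φ.2.2⟩

/-- The differential of `Mor(A)`:
`d(u,v,h) = (du, dv, dh + (-1)^n (f' u - v f))`. -/
def morD {P Q : MorObj A} {n : ℤ} (φ : MorHom A P Q n) : MorHom A P Q (n + 1) :=
  ⟨A.d φ.1, A.d φ.2.1,
    A.cst (show n - 1 + 1 = n + 1 - 1 by omega) (A.d φ.2.2) +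
      (n.negOnePow : ℤ) •
        (A.comp (show (0 : ℤ) + n = n + 1 - 1 by omega) Q.f φ.1 -
          A.comp (show n + (0 : ℤ) = n + 1 - 1 by omega) φ.2.1 P.f)⟩

/-- The identity morphisms of `Mor(A)`. -/
def morOne (P : MorObj A) : MorHom A P P 0 := ⟨A.one P.src, A.one P.tgt, 0⟩

/-- The dg-data of the category `Mor(A)` of homotopy coherent morphisms. -/
def MorData : DGData k where
  Obj := MorObj A
  Hom := MorHom A
  addgrp := fun _ _ _ => inferInstance
  smod := fun _ _ _ => inferInstance
  comp := fun e ψ φ => A.morComp e ψ φ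
  d := fun φ => A.morD φ
  one := A.morOne

/-- Transport of `Mor`-morphisms along an equality of degrees. -/
def morCst {P Q : MorObj A} {m n : ℤ} (e : m = n) (φ : MorHom A P Q m) :
    MorHom A P Q n := e ▸ φ

end DGData

/-- A dg-functor between dg-(data of) categories: commutes with the differential,
preserves composition and identities, and is `k`-linear on hom complexes. -/
structure DGFunctor {k : Type} [Field k] (A B : DGData k) where
  obj : A.Obj → B.Obj
  map : ∀ {X Y : A.Obj} {n : ℤ}, A.Hom X Y n → B.Hom (obj X) (obj Y) n
  map_add : ∀ {X Y : A.Obj} {n : ℤ} (f g : A.Hom X Y n), map (f + g) = map f + map g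
  map_smul : ∀ {X Y : A.Obj} {n : ℤ} (a : k) (f : A.Hom X Y n), map (a • f) = a • map f
  map_d : ∀ {X Y : A.Obj} {n : ℤ} (f : A.Hom X Y n), map (A.d f) = B.d (map f)
  map_comp : ∀ {X Y Z : A.Obj} {m n p : ℤ} (e : m + n = p)
    (g : A.Hom Y Z m) (f : A.Hom X Y n), map (A.comp e g f) = B.comp e (map g) (map f)
  map_one : ∀ X : A.Obj, map (A.one X) = B.one (obj X)

namespace DGData

variable {k : Type} [Field k]

/-- The first `A∞`-composition induced by a dg-structure: `μ¹(f) = (-1)^{|f|} d f`. -/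
def mu1 (A : DGData k) {X Y : A.Obj} {n : ℤ} (f : A.Hom X Y n) : A.Hom X Y (n + 1) :=
  (n.negOnePow : ℤ) • A.d f

/-- The second `A∞`-composition induced by a dg-structure: `μ²(g,f) = (-1)^{|f|} g∘f`. -/
def mu2 (A : DGData k) {X Y Z : A.Obj} {m n p : ℤ} (e : m + n = p)
    (g : A.Hom Y Z m) (f : A.Hom X Y n) : A.Hom X Z p :=
  (n.negOnePow : ℤ) • A.comp e g f

end DGData

namespace DGData

variable {k : Type} [Field k]

/-- A composable chain `(f_d, …, f_1)` of homogeneous morphisms in a dg-category, from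
`X` to `Y`, of total degree `s` and length `d`. -/
inductive Chain (A : DGData k) : A.Obj → A.Obj → ℤ → ℕ → Type
  | single {X Y : A.Obj} {n : ℤ} (f : A.Hom X Y n) : Chain A X Y n 1
  | cons {X Y Z : A.Obj} {n s : ℤ} {d : ℕ} (f : A.Hom Y Z n) (c : Chain A X Y s d) :
      Chain A X Z (n + s) (d + 1)

/-- Transport of chains along an equality of total degrees. -/
def ccast (A : DGData k) {X Y : A.Obj} {s s' : ℤ} {d : ℕ} (e : s = s')
    (c : Chain A X Y s d) : Chain A X Y s' d := e ▸ c

/-- `mods1 A c` is the list of chains obtained from `c` by applying `μ¹` to one entry,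
together with the corresponding sign `(-1)^{✠ₙ}`. -/
def mods1 (A : DGData k) : ∀ {X Y : A.Obj} {s : ℤ} {d : ℕ},
    Chain A X Y s d → List (ℤ × Chain A X Y (s + 1) d)
  | _, _, _, _, .single f => [((1 : ℤ), .single (A.mu1 f))]
  | _, _, _, _, .cons (n := n) (s := s') (d := d') f c =>
      (((s' - (d' : ℤ)).negOnePow : ℤ),
        ccast A (show n + 1 + s' = n + s' + 1 by omega) (.cons (A.mu1 f) c)) ::
      (mods1 A c).map (fun q =>
        (q.1, ccast A (show n + (s' + 1) = n + s' + 1 by omega) (.cons f q.2)))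

/-- `mods2 A c` is the list of chains obtained from `c` by merging two consecutive entries
with `μ²`, together with the corresponding sign `(-1)^{✠ₙ}`. -/
def mods2 (A : DGData k) : ∀ {X Y : A.Obj} {s : ℤ} {d : ℕ},
    Chain A X Y s d → List (ℤ × Chain A X Y s (d - 1))
  | _, _, _, _, .single _ => []
  | _, _, _, _, .cons f (.single g) => [((1 : ℤ), .single (A.mu2 rfl f g))]
  | _, _, _, _, .cons (n := nf) f (.cons (n := ng) (s := sc) (d := dc) g c) =>
      (((sc - (dc : ℤ)).negOnePow : ℤ),
        ccast A (show nf + ng + sc = nf + (ng + sc) by omega)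
          (.cons (A.mu2 rfl f g) c)) ::
      (mods2 A (.cons g c)).map (fun q => (q.1, .cons f q.2))

/-- A way of splitting a chain into a (nonempty) top part and a (nonempty) bottom part. -/
structure Split (A : DGData k) (X Y : A.Obj) (s : ℤ) (d : ℕ) : Type where
  {M : A.Obj} {t s' : ℤ} {e d' : ℕ}
  top : Chain A M Y t e
  bot : Chain A X M s' d'
  hs : t + s' = s
  hd : e + d' = d

/-- The list of all splittings of a chain into two nonempty parts. -/
def splitPairs (A : DGData k) : ∀ {X Y : A.Obj} {s : ℤ} {d : ℕ},
    Chain A X Y s d → List (Split A X Y s d)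
  | _, _, _, _, .single _ => []
  | _, _, _, _, .cons (n := n) (s := s') (d := d') f c =>
      ⟨.single f, c, rfl, by omega⟩ ::
      (splitPairs A c).map (fun σ =>
        ⟨.cons f σ.top, σ.bot, by have := σ.hs; omega, by have := σ.hd; omega⟩)

/-- Whether a homogeneous morphism is an identity morphism. -/
def IsIdElem (A : DGData k) {X Y : A.Obj} {n : ℤ} (f : A.Hom X Y n) : Prop :=
  ∃ _ : X = Y, n = 0 ∧ HEq f (A.one X)

/-- Whether a chain contains an identity morphism among its entries. -/
def HasId (A : DGData k) : ∀ {X Y : A.Obj} {s : ℤ} {d : ℕ}, Chain A X Y s d → Prop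
  | _, _, _, _, .single f => A.IsIdElem f
  | _, _, _, _, .cons f c => A.IsIdElem f ∨ HasId A c

/-- The data of an `A∞`-functor between dg-categories: an assignment on objects together
with maps `F^d` defined on composable chains of length `d ≥ 1`, `F^d` lowering the total
degree by `d - 1`. -/
structure APre (A B : DGData k) : Type where
  obj : A.Obj → B.Obj
  map : ∀ {X Y : A.Obj} {s : ℤ} {d : ℕ} {p : ℤ},
    s + 1 - d = p → Chain A X Y s d → B.Hom (obj X) (obj Y) p

variable {A B : DGData k}

/-- The term `∑_{j=1}^{d-1} μ²_B(F^j(f_d,…,f_{d-j+1}), F^{d-j}(f_{d-j},…,f_1))`. -/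
def splitSum (F : APre A B) {X Y : A.Obj} {s : ℤ} {d : ℕ} {p : ℤ}
    (hp : s + 2 - d = p) (c : Chain A X Y s d) : B.Hom (F.obj X) (F.obj Y) p :=
  ((splitPairs A c).map (fun σ =>
    B.mu2 (show σ.t + 1 - σ.e + (σ.s' + 1 - σ.d') = p by
        have h1 := σ.hs; have h2 := σ.hd; omega)
      (F.map rfl σ.top) (F.map rfl σ.bot))).sum

/-- The term `∑_{n} (-1)^{✠ₙ} F^d(f_d, …, μ¹(f_{n+1}), …, f_1)`. -/
def mods1Sum (F : APre A B) {X Y : A.Obj} {s : ℤ} {d : ℕ} {p : ℤ}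
    (hp : s + 2 - d = p) (c : Chain A X Y s d) : B.Hom (F.obj X) (F.obj Y) p :=
  ((mods1 A c).map (fun q => q.1 • F.map (show s + 1 + 1 - d = p by omega) q.2)).sum

/-- The term `∑_{n} (-1)^{✠ₙ} F^{d-1}(f_d, …, μ²(f_{n+2},f_{n+1}), …, f_1)`. -/
def mods2Sum (F : APre A B) {X Y : A.Obj} {s : ℤ} {d : ℕ} {p : ℤ} (hd : 1 ≤ d)
    (hp : s + 2 - d = p) (c : Chain A X Y s d) : B.Hom (F.obj X) (F.obj Y) p :=
  ((mods2 A c).map (fun q =>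
    q.1 • F.map (show s + 1 - ((d - 1 : ℕ) : ℤ) = p by
      rw [Int.natCast_sub hd]; omega) q.2)).sum

/-- The property of being a (strictly unital) `A∞`-functor between dg-categories:
the `A∞`-functor equations (in the form they take when source and target are dg) and
strict unitality. -/
def IsAInf (F : APre A B) : Prop :=
  (∀ {X Y : A.Obj} {s : ℤ} {d : ℕ} {p : ℤ} (hp : s + 2 - d = p) (hd : 1 ≤ d)
    (c : Chain A X Y s d),
    B.cst (show s + 1 - d + 1 = p by omega) (B.mu1 (F.map rfl c)) + splitSum F hp c =
      mods1Sum F hp c + mods2Sum F hd hp c) ∧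
  (∀ X : A.Obj,
    F.map (show (0 : ℤ) + 1 - (1 : ℕ) = 0 by norm_num) (.single (A.one X)) =
      B.one (F.obj X)) ∧
  (∀ {X Y : A.Obj} {s : ℤ} {d : ℕ} {p : ℤ} (hp : s + 1 - d = p) (c : Chain A X Y s d),
    2 ≤ d → HasId A c → F.map hp c = 0)

end DGData

namespace DGData

variable {k : Type} [Field k]

theorem chain_len_pos (A : DGData k) {X Y : A.Obj} {s : ℤ} {d : ℕ}
    (c : Chain A X Y s d) : 1 ≤ d := by cases c <;> omega

variable {A B : DGData k}

/-- A pre-natural transformation of degree `g` between `A∞`-functors: a family of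
components `h⁰_X` together with higher components `h^d` defined on composable chains. -/
structure PreNat (F G : APre A B) (g : ℤ) : Type where
  h0 : ∀ X : A.Obj, B.Hom (F.obj X) (G.obj X) g
  hmap : ∀ {X Y : A.Obj} {s : ℤ} {d : ℕ} {p : ℤ},
    s + g - d = p → Chain A X Y s d → B.Hom (F.obj X) (G.obj Y) p

namespace PreNat

variable {F G : APre A B} {g : ℤ}

instance : Zero (PreNat F G g) := ⟨⟨fun _ => 0, fun _ _ => 0⟩⟩
instance : Add (PreNat F G g) :=
  ⟨fun a b => ⟨fun X => a.h0 X + b.h0 X, fun e c => a.hmap e c + b.hmap e c⟩⟩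
instance : Neg (PreNat F G g) := ⟨fun a => ⟨fun X => -a.h0 X, fun e c => -a.hmap e c⟩⟩
instance : Sub (PreNat F G g) :=
  ⟨fun a b => ⟨fun X => a.h0 X - b.h0 X, fun e c => a.hmap e c - b.hmap e c⟩⟩

/-- Transport of pre-natural transformations along an equality of degrees. -/
def ncast {g g' : ℤ} (e : g = g') (h : PreNat F G g) : PreNat F G g' := e ▸ h

end PreNat

/-- The differential `μ¹` on pre-natural transformations (Seidel's formula `A^d - B^d`). -/
def delta {F G : APre A B} {g : ℤ} (h : PreNat F G g) : PreNat F G (g + 1) where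
  h0 X := B.mu1 (h.h0 X)
  hmap {X Y s d p} e c :=
    (B.cst (show s + g - d + 1 = p by omega) (B.mu1 (h.hmap rfl c)) +
      B.mu2 (show s + 1 - d + g = p by omega) (G.map rfl c) (h.h0 X) +
      (((s - d) * (g - 1)).negOnePow : ℤ) •
        B.mu2 (show g + (s + 1 - d) = p by omega) (h.h0 Y) (F.map rfl c) +
      ((splitPairs A c).map (fun σ =>
        B.mu2 (show σ.t + 1 - σ.e + (σ.s' + g - σ.d') = p by
            have h1 := σ.hs; have h2 := σ.hd; omega)
          (G.map rfl σ.top) (h.hmap rfl σ.bot))).sum +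
      ((splitPairs A c).map (fun σ =>
        (((σ.s' - σ.d') * (g - 1)).negOnePow : ℤ) •
          B.mu2 (show σ.t + g - σ.e + (σ.s' + 1 - σ.d') = p by
              have h1 := σ.hs; have h2 := σ.hd; omega)
            (h.hmap rfl σ.top) (F.map rfl σ.bot))).sum) -
    ((g - 1).negOnePow : ℤ) •
      (((mods1 A c).map (fun q =>
          q.1 • h.hmap (show s + 1 + g - d = p by omega) q.2)).sum +
        ((mods2 A c).map (fun q =>
          q.1 • h.hmap (show s + g - ((d - 1 : ℕ) : ℤ) = p by
            have := chain_len_pos A c; omega) q.2)).sum)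

/-- The vertical composition of pre-natural transformations. -/
def vcomp {F G H : APre A B} {m n : ℤ} (β : PreNat G H m) (α : PreNat F G n) :
    PreNat F H (m + n) where
  h0 X := B.comp rfl (β.h0 X) (α.h0 X)
  hmap {X Y s d p} e c :=
    B.comp (show m + (s + n - d) = p by omega) (β.h0 Y) (α.hmap rfl c) +
    B.comp (show s + m - d + n = p by omega) (β.hmap rfl c) (α.h0 X) +
    ((splitPairs A c).map (fun σ =>
      B.comp (show σ.t + m - σ.e + (σ.s' + n - σ.d') = p by
          have h1 := σ.hs; have h2 := σ.hd; omega)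
        (β.hmap rfl σ.top) (α.hmap rfl σ.bot))).sum

/-- The identity natural transformation. -/
def idNat (F : APre A B) : PreNat F F 0 := ⟨fun X => B.one (F.obj X), fun _ _ => 0⟩

/-- A pre-natural transformation of degree `0` is closed when `μ¹(h) = 0`. -/
def IsClosedNat {F G : APre A B} (φ : PreNat F G 0) : Prop := delta φ = 0

/-- Two degree-`0` pre-natural transformations are homotopic if they differ by a
`μ¹`-coboundary. -/
def Homotopic {F G : APre A B} (a b : PreNat F G 0) : Prop :=
  ∃ s : PreNat F G (-1),
    a - b = PreNat.ncast (show (-1 : ℤ) + 1 = 0 by omega) (delta s)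

/-- Strict unitality of a pre-natural transformation: its higher components vanish
on chains containing an identity. -/
def IsUnitalNat {F G : APre A B} {g : ℤ} (φ : PreNat F G g) : Prop :=
  ∀ {X Y : A.Obj} {s : ℤ} {d : ℕ} {p : ℤ} (e : s + g - d = p)
    (c : Chain A X Y s d), HasId A c → φ.hmap e c = 0

/-- A closed degree-zero morphism in a dg-category is a homotopy equivalence if it becomes
invertible in `H⁰`. -/
def HtpyEquiv (B : DGData k) {X Y : B.Obj} (f : B.Hom X Y 0) : Prop :=
  ∃ g : B.Hom Y X 0, B.d g = 0 ∧
    (∃ s : B.Hom X X (-1),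
      B.comp (show (0:ℤ) + 0 = 0 by omega) g f - B.one X =
        B.cst (show (-1:ℤ) + 1 = 0 by omega) (B.d s)) ∧
    (∃ t : B.Hom Y Y (-1),
      B.comp (show (0:ℤ) + 0 = 0 by omega) f g - B.one Y =
        B.cst (show (-1:ℤ) + 1 = 0 by omega) (B.d t))

/-- Two `A∞`-functors are isomorphic in `H⁰(RHom(A,B)) = H⁰(Fun_{A∞}(A,B))` when there are
closed degree-zero natural transformations between them which are mutually inverse up to
homotopy. -/
def QIso (F G : APre A B) : Prop :=
  ∃ φ : PreNat F G 0, IsClosedNat φ ∧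
    ∃ ψ : PreNat G F 0, IsClosedNat ψ ∧
      Homotopic (PreNat.ncast (show (0:ℤ) + 0 = 0 by omega) (vcomp ψ φ)) (idNat F) ∧
      Homotopic (PreNat.ncast (show (0:ℤ) + 0 = 0 by omega) (vcomp φ ψ)) (idNat G)

/-- The first component `F¹` of an `A∞`-functor, on degree-0 morphisms. -/
def map1 (F : APre A B) {X Y : A.Obj} (f : A.Hom X Y 0) :
    B.Hom (F.obj X) (F.obj Y) 0 :=
  F.map (show (0:ℤ) + 1 - ((1:ℕ) : ℤ) = 0 by norm_num) (.single f)

/-- A natural transformation `H⁰(F) → H⁰(G)`, given by representatives: a family of closed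
degree-0 components, natural up to coboundary. -/
def NatH0 (F G : APre A B) (bar : ∀ X : A.Obj, B.Hom (F.obj X) (G.obj X) 0) : Prop :=
  (∀ X, B.d (bar X) = 0) ∧
  (∀ {X Y : A.Obj} (f : A.Hom X Y 0), A.d f = 0 →
    ∃ s : B.Hom (F.obj X) (G.obj Y) (-1),
      B.comp (show (0:ℤ) + 0 = 0 by omega) (map1 G f) (bar X) -
          B.comp (show (0:ℤ) + 0 = 0 by omega) (bar Y) (map1 F f) =
        B.cst (show (-1:ℤ) + 1 = 0 by omega) (B.d s))

/-- A natural isomorphism `H⁰(F) ≅ H⁰(G)`, given by representatives. -/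
def NatH0Iso (F G : APre A B) : Prop :=
  ∃ bar : ∀ X : A.Obj, B.Hom (F.obj X) (G.obj X) 0,
    NatH0 F G bar ∧ ∀ X, HtpyEquiv B (bar X)

end DGData

namespace DGData

variable {k : Type} [Field k]

/-- The source dg-functor `S : Mor(B) → B`. -/
def morS (B : DGData k) : DGFunctor (MorData B) B where
  obj P := P.src
  map φ := φ.1
  map_add _ _ := rfl
  map_smul _ _ := rfl
  map_d _ := rfl
  map_comp _ _ _ := rfl
  map_one _ := rfl

/-- The target dg-functor `T : Mor(B) → B`. -/
def morT (B : DGData k) : DGFunctor (MorData B) B where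
  obj P := P.tgt
  map φ := φ.2.1
  map_add _ _ := rfl
  map_smul _ _ := rfl
  map_d _ := rfl
  map_comp _ _ _ := rfl
  map_one _ := rfl

variable {A B C : DGData k}

/-- Post-composition of an `A∞`-functor with a dg-functor. -/
def postcompDG (G : DGFunctor B C) (F : APre A B) : APre A C where
  obj := G.obj ∘ F.obj
  map e c := G.map (F.map e c)

/-- The `A∞`-functor `A → Mor(B)` associated with a closed degree-0 natural
transformation `h : F → G`, given by `φ^d = (F^d, G^d, h^d)`. -/
def natToMor (F G : APre A B) (h : PreNat F G 0) (hcl : IsClosedNat h) :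
    APre A (MorData B) where
  obj X :=
    ⟨F.obj X, G.obj X, h.h0 X, by
      have h1 : (delta h).h0 X = (0 : PreNat F G (0 + 1)).h0 X := by rw [hcl]
      simpa [delta, DGData.mu1, Int.negOnePow_zero] using (h1.trans rfl : (delta h).h0 X = 0)⟩
  map {X Y s d p} e c :=
    (F.map e c, G.map e c, h.hmap (show s + 0 - d = p - 1 by omega) c)

end DGData

/-!
Write `φᵈ = (uᵈ, vᵈ, hᵈ)` for the components of a pre-functor `φ : A → Mor(B)`. Since `S` and `T`
are strict dg-functors, the first two components of the `A∞`-functor equations (and of strict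
unitality) for `φ` are those for `S ∘ φ` and `T ∘ φ`. The third component of the `A∞`-functor
equation of degree `d` is, once the Koszul signs of `μ¹` and `μ²` in `Mor(B)` are sorted out,
exactly `μ¹(h)ᵈ = 0` for the pre-natural transformation `h = (φ⁰(X).f, hᵈ) : S ∘ φ → T ∘ φ`, and
the third component of strict unitality is strict unitality of `h`. Hence `φ ↦ h` inverts
`h ↦ (F, G, h)` on the stated sets.
-/

theorem List.sum_map_neg {ι M : Type*} [AddCommGroup M] (l : List ι) (f : ι → M) :
    (l.map fun i => -f i).sum = -(l.map f).sum := by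
  simpa [Function.comp_def] using (map_list_sum (negAddMonoidHom : M →+ M) (l.map f)).symm

theorem Int.negOnePow_add_one_sub (a b : ℤ) : (a + 1 - b).negOnePow = -(a - b).negOnePow := by
  rw [show a + 1 - b = a - b + 1 by ring, Int.negOnePow_succ]

theorem Int.units_zsmul_units_zsmul_self {M : Type*} [AddCommGroup M] (u : ℤˣ) (x : M) :
    (u : ℤ) • (u : ℤ) • x = x := by
  rw [smul_smul, ← Units.val_mul, Int.units_mul_self, Units.val_one, one_smul]

namespace DGData

variable {k : Type} [Field k]

section Cast

variable {B : DGData k} {X Y Z : B.Obj}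

theorem cst_add {m n : ℤ} (e : m = n) (f g : B.Hom X Y m) :
    B.cst e (f + g) = B.cst e f + B.cst e g := by subst e; rfl

theorem cst_sub {m n : ℤ} (e : m = n) (f g : B.Hom X Y m) :
    B.cst e (f - g) = B.cst e f - B.cst e g := by subst e; rfl

theorem cst_zsmul {m n : ℤ} (e : m = n) (z : ℤ) (f : B.Hom X Y m) :
    B.cst e (z • f) = z • B.cst e f := by subst e; rfl

theorem cst_zero {m n : ℤ} (e : m = n) : B.cst e (0 : B.Hom X Y m) = 0 := by subst e; rfl

theorem cst_cst {m n p : ℤ} (e₁ : m = n) (e₂ : n = p) (f : B.Hom X Y m) :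
    B.cst e₂ (B.cst e₁ f) = B.cst (e₁.trans e₂) f := by subst e₁; subst e₂; rfl

theorem cst_comp {m n p q : ℤ} (e : m + n = p) (e' : p = q) (g : B.Hom Y Z m)
    (f : B.Hom X Y n) : B.cst e' (B.comp e g f) = B.comp (e.trans e') g f := by subst e'; rfl

theorem comp_cst_left {m m' n p : ℤ} (e' : m' = m) (e : m + n = p) (g : B.Hom Y Z m')
    (f : B.Hom X Y n) : B.comp e (B.cst e' g) f = B.comp (by omega) g f := by subst e'; rfl

theorem comp_cst_right {m n n' p : ℤ} (e' : n' = n) (e : m + n = p) (g : B.Hom Y Z m)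
    (f : B.Hom X Y n') : B.comp e g (B.cst e' f) = B.comp (by omega) g f := by subst e'; rfl

theorem d_cst {m n : ℤ} (e : m = n) (f : B.Hom X Y m) :
    B.d (B.cst e f) = B.cst (by omega) (B.d f) := by subst e; rfl

end Cast

variable {A B : DGData k} {X Y : A.Obj} {s : ℤ} {d : ℕ}

theorem PreNat.cst_hmap {F G : APre A B} {g : ℤ} (h : PreNat F G g) {p q : ℤ}
    (e : s + g - d = p) (E : p = q) (c : Chain A X Y s d) :
    B.cst E (h.hmap e c) = h.hmap (e.trans E) c := by subst E; rfl

theorem PreNat.ext {F G : APre A B} {g : ℤ} {u v : PreNat F G g} (h0 : ∀ X, u.h0 X = v.h0 X)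
    (hmap : ∀ {X Y : A.Obj} {s : ℤ} {d : ℕ} {p : ℤ} (e : s + g - d = p)
      (c : Chain A X Y s d), u.hmap e c = v.hmap e c) : u = v := by
  obtain ⟨u0, um⟩ := u
  obtain ⟨v0, vm⟩ := v
  obtain rfl : u0 = v0 := funext h0
  obtain rfl : @um = @vm := by funext X Y s d p e c; exact hmap e c
  rfl

variable {p : ℤ}

def aInfLhs (F : APre A B) (hp : s + 2 - d = p) (c : Chain A X Y s d) :
    B.Hom (F.obj X) (F.obj Y) p :=
  B.cst (show s + 1 - d + 1 = p by omega) (B.mu1 (F.map rfl c)) + splitSum F hp c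

def aInfRhs (F : APre A B) (hp : s + 2 - d = p) (hd : 1 ≤ d) (c : Chain A X Y s d) :
    B.Hom (F.obj X) (F.obj Y) p :=
  mods1Sum F hp c + mods2Sum F hd hp c

theorem IsAInf.aInfLhs_eq {F : APre A B} (hF : IsAInf F) (hp : s + 2 - d = p) (hd : 1 ≤ d)
    (c : Chain A X Y s d) : aInfLhs F hp c = aInfRhs F hp hd c :=
  hF.1 hp hd c

end DGData

namespace DGFunctor

open DGData

variable {k : Type} [Field k] {A B C : DGData k} (Φ : DGFunctor B C)

def mapAddHom (X Y : B.Obj) (n : ℤ) : B.Hom X Y n →+ C.Hom (Φ.obj X) (Φ.obj Y) n :=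
  AddMonoidHom.mk' Φ.map Φ.map_add

theorem map_zsmul {X Y : B.Obj} {n : ℤ} (z : ℤ) (f : B.Hom X Y n) :
    Φ.map (z • f) = z • Φ.map f :=
  _root_.map_zsmul (Φ.mapAddHom X Y n) z f

theorem map_list_sum {ι : Type*} {X Y : B.Obj} {n : ℤ} (l : List ι) (f : ι → B.Hom X Y n) :
    Φ.map (l.map f).sum = (l.map fun i => Φ.map (f i)).sum :=
  (_root_.map_list_sum (Φ.mapAddHom X Y n) (l.map f)).trans (by rw [List.map_map]; rfl)

theorem map_cst {X Y : B.Obj} {m n : ℤ} (e : m = n) (f : B.Hom X Y m) :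
    Φ.map (B.cst e f) = C.cst e (Φ.map f) := by subst e; rfl

theorem map_mu1 {X Y : B.Obj} {n : ℤ} (f : B.Hom X Y n) : Φ.map (B.mu1 f) = C.mu1 (Φ.map f) := by
  rw [mu1, mu1, map_zsmul, map_d]

theorem map_mu2 {X Y Z : B.Obj} {m n p : ℤ} (e : m + n = p) (g : B.Hom Y Z m)
    (f : B.Hom X Y n) : Φ.map (B.mu2 e g f) = C.mu2 e (Φ.map g) (Φ.map f) := by
  rw [mu2, mu2, map_zsmul, map_comp]

variable (F : APre A B) {X Y : A.Obj} {s : ℤ} {d : ℕ} {p : ℤ} (c : Chain A X Y s d)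

theorem map_splitSum (hp : s + 2 - d = p) :
    Φ.map (splitSum F hp c) = splitSum (postcompDG Φ F) hp c := by
  simp only [splitSum, map_list_sum, map_mu2]
  rfl

theorem map_mods1Sum (hp : s + 2 - d = p) :
    Φ.map (mods1Sum F hp c) = mods1Sum (postcompDG Φ F) hp c := by
  simp only [mods1Sum, map_list_sum, map_zsmul]
  rfl

theorem map_mods2Sum (hd : 1 ≤ d) (hp : s + 2 - d = p) :
    Φ.map (mods2Sum F hd hp c) = mods2Sum (postcompDG Φ F) hd hp c := by
  simp only [mods2Sum, map_list_sum, map_zsmul]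
  rfl

theorem map_aInfLhs (hp : s + 2 - d = p) :
    Φ.map (aInfLhs F hp c) = aInfLhs (postcompDG Φ F) hp c := by
  rw [aInfLhs, Φ.map_add, map_cst, map_mu1, map_splitSum]
  rfl

theorem map_aInfRhs (hp : s + 2 - d = p) (hd : 1 ≤ d) :
    Φ.map (aInfRhs F hp hd c) = aInfRhs (postcompDG Φ F) hp hd c := by
  rw [aInfRhs, Φ.map_add, map_mods1Sum, map_mods2Sum]
  rfl

end DGFunctor

namespace DGData

variable {k : Type} [Field k] {A B : DGData k}

namespace MorData

variable {P Q R : (MorData B).Obj}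

theorem hom_ext {n : ℤ} {x y : (MorData B).Hom P Q n} (h₁ : x.1 = y.1) (h₂ : x.2.1 = y.2.1)
    (h₃ : x.2.2 = y.2.2) : x = y :=
  Prod.ext h₁ (Prod.ext h₂ h₃)

theorem snd_snd_add {n : ℤ} (x y : (MorData B).Hom P Q n) : (x + y).2.2 = x.2.2 + y.2.2 := rfl

theorem snd_snd_zsmul {n : ℤ} (z : ℤ) (x : (MorData B).Hom P Q n) : (z • x).2.2 = z • x.2.2 :=
  rfl

theorem snd_snd_list_sum {ι : Type*} {n : ℤ} (l : List ι) (f : ι → (MorData B).Hom P Q n) :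
    (l.map f).sum.2.2 = (l.map fun i => (f i).2.2).sum :=
  (map_list_sum ((AddMonoidHom.snd _ _).comp (AddMonoidHom.snd _ _)) (l.map f)).trans
    (by rw [List.map_map]; rfl)

theorem snd_snd_cst {m n : ℤ} (e : m = n) (x : (MorData B).Hom P Q m) :
    ((MorData B).cst e x).2.2 = B.cst (by omega) x.2.2 := by subst e; rfl

theorem snd_snd_d {n : ℤ} (x : (MorData B).Hom P Q n) :
    ((MorData B).d x).2.2 =
      B.cst (by omega) (B.d x.2.2) +
        (n.negOnePow : ℤ) • (B.comp (by omega) Q.f x.1 - B.comp (by omega) x.2.1 P.f) := rfl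

theorem snd_snd_comp {m n p : ℤ} (e : m + n = p) (g : (MorData B).Hom Q R m)
    (f : (MorData B).Hom P Q n) :
    ((MorData B).comp e g f).2.2 =
      (n.negOnePow : ℤ) • B.comp (by omega) g.2.2 f.1 + B.comp (by omega) g.2.1 f.2.2 := rfl

end MorData

section Collapse

variable (φ : APre A (MorData B)) {X Y : A.Obj} {s : ℤ} {d : ℕ} (c : Chain A X Y s d)

theorem cst_snd_snd_map_eq {p₁ p₂ r : ℤ} (e₁ : s + 1 - d = p₁) (e₂ : s + 1 - d = p₂)
    (E₁ : p₁ - 1 = r) (E₂ : p₂ - 1 = r) :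
    B.cst E₁ (φ.map e₁ c).2.2 = B.cst E₂ (φ.map e₂ c).2.2 := by
  obtain rfl : p₁ = p₂ := by omega
  rfl

theorem cst_snd_snd_map {p₁ p₂ : ℤ} (e : s + 1 - d = p₁) (E : p₁ - 1 = p₂ - 1) :
    B.cst E (φ.map e c).2.2 = (φ.map (show s + 1 - (d : ℤ) = p₂ by omega) c).2.2 :=
  cst_snd_snd_map_eq φ c e _ E rfl

theorem snd_snd_map_eq_cst {p : ℤ} (e : s + 1 - d = p) :
    (φ.map e c).2.2 = B.cst (by omega) (φ.map rfl c).2.2 := by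
  subst e
  rfl

-- The degree `p + 1` keeps this usable by `simp` alongside `cst_snd_snd_map` without looping.
theorem snd_snd_map_succ {p : ℤ} (e : s + 1 - d = p + 1) :
    (φ.map e c).2.2 = B.cst (by omega) (φ.map rfl c).2.2 :=
  snd_snd_map_eq_cst φ c e

end Collapse

-- Lets `simp` identify the objects of `S ∘ φ` and `T ∘ φ` with the sources and targets of those
-- of `φ`; otherwise the cast lemmas above fail to unify their implicit object arguments.
attribute [reducible] postcompDG morS morT

def morToNat (φ : APre A (MorData B)) :
    PreNat (postcompDG (morS B) φ) (postcompDG (morT B) φ) 0 where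
  h0 X := (φ.obj X).f
  hmap {_ _ s d p} _ c :=
    B.cst (show p + 1 - 1 = p by omega) (φ.map (show s + 1 - (d : ℤ) = p + 1 by omega) c).2.2

theorem morToNat_natToMor (F G : APre A B) (h : PreNat F G 0) (hcl : IsClosedNat h) :
    morToNat (natToMor F G h hcl) = h :=
  PreNat.ext (fun _ => rfl) fun _ _ => h.cst_hmap _ _ _

theorem natToMor_morToNat (φ : APre A (MorData B)) (hcl : IsClosedNat (morToNat φ)) :
    natToMor _ _ (morToNat φ) hcl = φ := by
  obtain ⟨obj, map⟩ := φ
  show APre.mk _ _ = _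
  congr 1
  funext X Y s d p e c
  exact MorData.hom_ext rfl rfl (cst_snd_snd_map ⟨obj, map⟩ c _ _)

theorem delta_morToNat_hmap (φ : APre A (MorData B)) {X Y : A.Obj} {s : ℤ} {d : ℕ} {p : ℤ}
    (hp : s + 2 - d = p) (hd : 1 ≤ d) (c : Chain A X Y s d) :
    (delta (morToNat φ)).hmap (show s + (0 + 1) - (d : ℤ) = p - 1 by omega) c =
      (aInfRhs φ hp hd c).2.2 - (aInfLhs φ hp c).2.2 := by
  simp only [delta, aInfLhs, aInfRhs, splitSum, mods1Sum, mods2Sum, mu1, mu2, morToNat,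
    MorData.snd_snd_add, MorData.snd_snd_zsmul, MorData.snd_snd_d, MorData.snd_snd_comp,
    MorData.snd_snd_cst, MorData.snd_snd_list_sum, cst_cst, cst_comp, cst_add, cst_zsmul,
    cst_sub, smul_add, smul_sub, Int.negOnePow_zero, zero_sub, mul_neg_one, Int.negOnePow_neg,
    Int.negOnePow_one]
  simp only [add_zero, Int.negOnePow_add_one_sub, Units.val_neg, Units.val_one, neg_smul,
    smul_neg, neg_neg, one_smul, Int.units_zsmul_units_zsmul_self, List.sum_map_add,
    List.sum_map_neg]
  simp only [snd_snd_map_succ, cst_cst, d_cst, comp_cst_left, comp_cst_right]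
  simp only [cst_snd_snd_map]
  abel

theorem isClosedNat_morToNat {φ : APre A (MorData B)} (hφ : IsAInf φ) :
    IsClosedNat (morToNat φ) := by
  refine PreNat.ext (fun X => ?_) fun {X Y s d p} e c => ?_
  · show ((0 : ℤ).negOnePow : ℤ) • B.d (φ.obj X).f = 0
    rw [(φ.obj X).closed, smul_zero]
  · obtain ⟨q, rfl⟩ : ∃ q, p = q - 1 := ⟨p + 1, by omega⟩
    have hp : s + 2 - d = q := by omega
    rw [delta_morToNat_hmap φ hp (chain_len_pos A c), hφ.aInfLhs_eq hp (chain_len_pos A c), sub_self]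
    rfl

theorem isUnitalNat_morToNat {φ : APre A (MorData B)} (hφ : IsAInf φ) :
    IsUnitalNat (morToNat φ) := by
  intro X Y s d p e c hc
  cases c with
  | single f =>
    obtain ⟨rfl, rfl, hf⟩ := hc
    obtain rfl := eq_of_heq hf
    dsimp only [morToNat]
    rw [cst_snd_snd_map_eq φ _ _ (show (0 : ℤ) + 1 - (1 : ℕ) = 0 by norm_num) _
      (show (0 : ℤ) - 1 = p by omega), hφ.2.1]
    exact cst_zero _
  | cons f c =>
    dsimp only [morToNat]
    rw [hφ.2.2 _ _ (by have := chain_len_pos A c; omega) hc]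
    exact cst_zero _

theorem eq_of_natToMor_eq {F G : APre A B} {h₁ h₂ : PreNat F G 0} {hcl₁ : IsClosedNat h₁}
    {hcl₂ : IsClosedNat h₂} (heq : natToMor F G h₁ hcl₁ = natToMor F G h₂ hcl₂) : h₁ = h₂ := by
  have e : morToNat (natToMor F G h₁ hcl₁) = morToNat (natToMor F G h₂ hcl₂) :=
    eq_of_heq (congr_arg_heq morToNat heq)
  exact (morToNat_natToMor F G h₁ hcl₁).symm.trans (e.trans (morToNat_natToMor F G h₂ hcl₂))

theorem isAInf_natToMor {F G : APre A B} (hF : IsAInf F) (hG : IsAInf G) {h : PreNat F G 0}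
    (hcl : IsClosedNat h) (hun : IsUnitalNat h) : IsAInf (natToMor F G h hcl) := by
  refine ⟨fun {X Y s d p} hp hd c => ?_, fun X => ?_, fun {X Y s d p} e c hd hc => ?_⟩
  · refine MorData.hom_ext ?_ ?_ ?_
    · exact ((morS B).map_aInfLhs (natToMor F G h hcl) c hp).trans
        ((hF.aInfLhs_eq hp hd c).trans ((morS B).map_aInfRhs (natToMor F G h hcl) c hp hd).symm)
    · exact ((morT B).map_aInfLhs (natToMor F G h hcl) c hp).trans
        ((hG.aInfLhs_eq hp hd c).trans ((morT B).map_aInfRhs (natToMor F G h hcl) c hp hd).symm)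
    · have hδ : IsClosedNat (morToNat (natToMor F G h hcl)) := by
        rw [morToNat_natToMor]
        exact hcl
      have key := delta_morToNat_hmap (natToMor F G h hcl) hp hd c
      rw [hδ] at key
      exact (sub_eq_zero.mp key.symm).symm
  · exact MorData.hom_ext (hF.2.1 X) (hG.2.1 X) (hun _ (.single (A.one X)) ⟨rfl, rfl, .rfl⟩)
  · exact MorData.hom_ext (hF.2.2 e c hd hc) (hG.2.2 e c hd hc) (hun _ c hc)

end DGData

open DGData in
/-- For strictly unital `A∞`-functors `F, G : A → B` between
dg-categories, the assignment `h ↦ φ`, `φ^d = (F^d, G^d, h^d)`, is a bijection between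
closed degree-0 (strictly unital) `A∞`-natural transformations `h : F → G` and
(strictly unital) `A∞`-functors `φ : A → Mor(B)` with `S∘φ = F` and `T∘φ = G`. -/
theorem nat_trans_as_functors_to_mor {k : Type} [Field k] (A B : DGCat k)
    (F G : APre A.toDGData B.toDGData) (hF : IsAInf F) (hG : IsAInf G) :
    Function.Injective
      (fun h : {h : PreNat F G 0 // IsClosedNat h ∧ IsUnitalNat h} =>
        natToMor F G h.1 h.2.1) ∧
    Set.range
        (fun h : {h : PreNat F G 0 // IsClosedNat h ∧ IsUnitalNat h} =>
          natToMor F G h.1 h.2.1) =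
      {φ : APre A.toDGData (MorData B.toDGData) |
        IsAInf φ ∧ postcompDG (morS B.toDGData) φ = F ∧
          postcompDG (morT B.toDGData) φ = G} := by
  refine ⟨fun _ _ heq => Subtype.ext (eq_of_natToMor_eq heq), Set.ext fun φ => ⟨?_, ?_⟩⟩
  · rintro ⟨⟨h, hcl, hun⟩, rfl⟩
    exact ⟨isAInf_natToMor hF hG hcl hun, rfl, rfl⟩
  · rintro ⟨hφ, rfl, rfl⟩
    exact ⟨⟨morToNat φ, isClosedNat_morToNat hφ, isUnitalNat_morToNat hφ⟩,
      natToMor_morToNat φ _⟩
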